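/- arXiv:2512.24910 — 2 statements merged into one kernel-verified Lean document; each statement's English description precedes it below -/
import Mathlib

section
/- (Ordering across the conditioning event) Let ν₁,…,νₙ be log-concave probability mass functions on ℕ, 0 < λ ≤ λ′ < λ^max, and R a real number. Then the law of 𝐗ₙ^λ conditioned on {Sₙ^λ < R} is stochastically dominated (coordinatewise order on ℕⁿ) by the law of 𝐗ₙ^{λ′} conditioned on {Sₙ^{λ′} > R}, provided both conditioning events have positive probability. -/
/-!
Holley's inequality: laws `p`, `q` on a distributive lattice with
`p x * q y ≤ p (x ⊓ y) * q (x ⊔ y)` satisfy `p ≤ q` stochastically. On finite lattices this is the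
four functions theorem; it extends to `ℕⁿ` through limits of finite partial sums. For the two
conditioned tilted laws the condition splits over coordinates, where it reads
`λ ^ a * λ' ^ b ≤ λ ^ min a b * λ' ^ max a b` (true as `λ ≤ λ'`), while `{S < R}` is a down-set and
`{S > R}` an up-set of `ℕⁿ`, so that `x ⊓ y` stays in the first event and `x ⊔ y` in the second.
-/

open scoped BigOperators
open scoped Classical

/-- The `l`-tilted measure of a pmf `ν` on `ℕ`. -/
noncomputable def tilt (ν : ℕ → ℝ) (l : ℝ) (x : ℕ) : ℝ :=
  l ^ x * ν x / (∑' y : ℕ, l ^ y * ν y)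

/-- A log-concave probability mass function on `ℕ`. -/
def LogConcavePMF (ν : ℕ → ℝ) : Prop :=
  (∀ x, 0 ≤ ν x) ∧
  (∀ x y : ℕ, x ≤ y → 0 < ν y → 0 < ν x) ∧
  (∀ x : ℕ, ν x * ν (x + 2) ≤ ν (x + 1) ^ 2)

/-- Law of the independent vector with marginals `μ i` conditioned on an event
depending on the sum of the coordinates. -/
noncomputable def condVec {n : ℕ} (μ : Fin n → ℕ → ℝ) (E : ℕ → Prop)
    (x : Fin n → ℕ) : ℝ :=
  (if E (∑ i, x i) then ∏ i, μ i (x i) else 0) /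
    (∑' y : Fin n → ℕ, if E (∑ i, y i) then ∏ i, μ i (y i) else 0)

/-- Stochastic domination in the coordinatewise order on `ℕⁿ`. -/
def StochDom {n : ℕ} (p q : (Fin n → ℕ) → ℝ) : Prop :=
  ∀ f : (Fin n → ℕ) → ℝ, Monotone f → (∃ C, ∀ x, |f x| ≤ C) →
    (∑' x, f x * p x) ≤ ∑' x, f x * q x

open Filter

section Holley

variable {α : Type*} [DistribLattice α]

theorem four_functions_theorem_tsum {f₁ f₂ f₃ f₄ : α → ℝ} (h₁ : 0 ≤ f₁) (h₂ : 0 ≤ f₂)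
    (h₃ : 0 ≤ f₃) (h₄ : 0 ≤ f₄) (hs₁ : Summable f₁) (hs₂ : Summable f₂) (hs₃ : Summable f₃)
    (hs₄ : Summable f₄) (h : ∀ a b, f₁ a * f₂ b ≤ f₃ (a ⊓ b) * f₄ (a ⊔ b)) :
    (∑' a, f₁ a) * ∑' a, f₂ a ≤ (∑' a, f₃ a) * ∑' a, f₄ a := by
  classical
  refine le_of_tendsto' (Tendsto.mul hs₁.hasSum hs₂.hasSum) fun s => ?_
  exact (four_functions_theorem f₁ f₂ f₃ f₄ h₁ h₂ h₃ h₄ h s s).trans <|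
    mul_le_mul (hs₃.sum_le_tsum _ fun a _ => h₃ a) (hs₄.sum_le_tsum _ fun a _ => h₄ a)
      (Finset.sum_nonneg fun a _ => h₄ a) (tsum_nonneg h₃)

theorem holley_tsum {μ p q : α → ℝ} (hμ : Monotone μ) (hμb : ∃ C, ∀ a, |μ a| ≤ C)
    (hp₀ : 0 ≤ p) (hq₀ : 0 ≤ q) (hp : HasSum p 1) (hq : HasSum q 1)
    (h : ∀ a b, p a * q b ≤ p (a ⊓ b) * q (a ⊔ b)) :
    ∑' a, μ a * p a ≤ ∑' a, μ a * q a := by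
  obtain ⟨C, hC⟩ := hμb
  have hg₀ : ∀ a, 0 ≤ μ a + C := fun a => by linarith [neg_abs_le (μ a), hC a]
  have summable_mul {r : α → ℝ} (hr₀ : 0 ≤ r) (hr : HasSum r 1) :
      Summable fun a => μ a * r a :=
    .of_norm_bounded (hr.summable.mul_left C) fun a => by
      rw [norm_mul, Real.norm_eq_abs, Real.norm_of_nonneg (hr₀ a)]
      exact mul_le_mul_of_nonneg_right (hC a) (hr₀ a)
  -- Shifting `μ` by its bound `C` makes it nonnegative, at the cost of `C` on both sides.
  have shifted {r : α → ℝ} (hr₀ : 0 ≤ r) (hr : HasSum r 1) :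
      HasSum (fun a => (μ a + C) * r a) (∑' a, μ a * r a + C) := by
    simpa [add_mul] using (summable_mul hr₀ hr).hasSum.add (hr.mul_left C)
  have key := four_functions_theorem_tsum hq₀ (fun a => mul_nonneg (hg₀ a) (hp₀ a)) hp₀
    (fun a => mul_nonneg (hg₀ a) (hq₀ a)) hq.summable (shifted hp₀ hp).summable hp.summable
    (shifted hq₀ hq).summable fun a b => by
      calc q a * ((μ b + C) * p b) = (μ b + C) * (p b * q a) := by ring
        _ ≤ (μ (a ⊔ b) + C) * (p (b ⊓ a) * q (b ⊔ a)) :=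
          mul_le_mul (by linarith [hμ (le_sup_right : b ≤ a ⊔ b)]) (h b a)
            (mul_nonneg (hp₀ b) (hq₀ a)) (hg₀ _)
        _ = p (a ⊓ b) * ((μ (a ⊔ b) + C) * q (a ⊔ b)) := by rw [inf_comm, sup_comm]; ring
  rw [hq.tsum_eq, hp.tsum_eq, (shifted hp₀ hp).tsum_eq, (shifted hq₀ hq).tsum_eq] at key
  linarith

end Holley

theorem prod_mul_prod_le_prod_inf_mul_prod_sup {ι L : Type*} [Fintype ι] [Lattice L]
    {u v : ι → L → ℝ} (hu : ∀ i a, 0 ≤ u i a) (hv : ∀ i a, 0 ≤ v i a)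
    (h : ∀ i a b, u i a * v i b ≤ u i (a ⊓ b) * v i (a ⊔ b)) (x y : ι → L) :
    (∏ i, u i (x i)) * ∏ i, v i (y i) ≤ (∏ i, u i ((x ⊓ y) i)) * ∏ i, v i ((x ⊔ y) i) := by
  simp only [← Finset.prod_mul_distrib, Pi.inf_apply, Pi.sup_apply]
  exact Finset.prod_le_prod (fun i _ => mul_nonneg (hu i _) (hv i _)) fun i _ => h i _ _

theorem tilt_nonneg {ν : ℕ → ℝ} (hν : ∀ x, 0 ≤ ν x) {l : ℝ} (hl : 0 ≤ l) (x : ℕ) :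
    0 ≤ tilt ν l x :=
  div_nonneg (mul_nonneg (pow_nonneg hl x) (hν x))
    (tsum_nonneg fun y => mul_nonneg (pow_nonneg hl y) (hν y))

theorem tilt_mul_tilt_le_tilt_inf_mul_tilt_sup {ν : ℕ → ℝ} (hν : ∀ x, 0 ≤ ν x) {l l' : ℝ}
    (hl : 0 ≤ l) (hll' : l ≤ l') (a b : ℕ) :
    tilt ν l a * tilt ν l' b ≤ tilt ν l (a ⊓ b) * tilt ν l' (a ⊔ b) := by
  rcases le_total a b with hab | hba
  · rw [inf_eq_left.mpr hab, sup_eq_right.mpr hab]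
  obtain ⟨k, rfl⟩ := Nat.exists_eq_add_of_le hba
  rw [inf_eq_right.mpr hba, sup_eq_left.mpr hba]
  unfold tilt
  rw [div_mul_div_comm, div_mul_div_comm]
  have hZ : 0 ≤ (∑' y, l ^ y * ν y) * ∑' y, l' ^ y * ν y :=
    mul_nonneg (tsum_nonneg fun y => mul_nonneg (pow_nonneg hl y) (hν y))
      (tsum_nonneg fun y => mul_nonneg (pow_nonneg (hl.trans hll') y) (hν y))
  gcongr ?_ / _
  calc l ^ (b + k) * ν (b + k) * (l' ^ b * ν b)
      = l ^ b * l' ^ b * (ν b * ν (b + k)) * l ^ k := by ring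
    _ ≤ l ^ b * l' ^ b * (ν b * ν (b + k)) * l' ^ k := by
      refine mul_le_mul_of_nonneg_left (pow_le_pow_left₀ hl hll' k) ?_
      exact mul_nonneg (mul_nonneg (pow_nonneg hl b) (pow_nonneg (hl.trans hll') b))
        (mul_nonneg (hν b) (hν (b + k)))
    _ = l ^ b * ν b * (l' ^ (b + k) * ν (b + k)) := by ring

section condVec

variable {n : ℕ} {μ μ' : Fin n → ℕ → ℝ} {E E' : ℕ → Prop}

theorem ite_prod_nonneg (hμ : ∀ i a, 0 ≤ μ i a) (y : Fin n → ℕ) :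
    0 ≤ if E (∑ i, y i) then ∏ i, μ i (y i) else 0 := by
  split_ifs
  exacts [Finset.prod_nonneg fun i _ => hμ i _, le_rfl]

theorem condVec_nonneg (hμ : ∀ i a, 0 ≤ μ i a) (x : Fin n → ℕ) : 0 ≤ condVec μ E x :=
  div_nonneg (ite_prod_nonneg hμ x) (tsum_nonneg (ite_prod_nonneg hμ))

theorem hasSum_condVec
    (hpos : 0 < ∑' y : Fin n → ℕ, if E (∑ i, y i) then ∏ i, μ i (y i) else 0) :
    HasSum (condVec μ E) 1 := by
  have hs : Summable fun y : Fin n → ℕ => if E (∑ i, y i) then ∏ i, μ i (y i) else 0 := by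
    by_contra hs
    rw [tsum_eq_zero_of_not_summable hs] at hpos
    exact hpos.false
  rw [← div_self hpos.ne']
  exact hs.hasSum.div_const _

theorem condVec_mul_condVec_le (hE : Antitone E) (hE' : Monotone E')
    (hμ : ∀ i a, 0 ≤ μ i a) (hμ' : ∀ i a, 0 ≤ μ' i a)
    (h : ∀ i a b, μ i a * μ' i b ≤ μ i (a ⊓ b) * μ' i (a ⊔ b)) (x y : Fin n → ℕ) :
    condVec μ E x * condVec μ' E' y ≤ condVec μ E (x ⊓ y) * condVec μ' E' (x ⊔ y) := by
  by_cases hx : E (∑ i, x i)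
  swap
  · simp only [condVec, if_neg hx, zero_div, zero_mul]
    exact mul_nonneg (condVec_nonneg hμ _) (condVec_nonneg hμ' _)
  by_cases hy : E' (∑ i, y i)
  swap
  · simp only [condVec, if_neg hy, zero_div, mul_zero]
    exact mul_nonneg (condVec_nonneg hμ _) (condVec_nonneg hμ' _)
  have hinf : E (∑ i, (x ⊓ y) i) := hE (Finset.sum_le_sum fun i _ => inf_le_left) hx
  have hsup : E' (∑ i, (x ⊔ y) i) := hE' (Finset.sum_le_sum fun i _ => le_sup_right) hy
  unfold condVec
  rw [if_pos hx, if_pos hy, if_pos hinf, if_pos hsup, div_mul_div_comm, div_mul_div_comm]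
  exact div_le_div_of_nonneg_right (prod_mul_prod_le_prod_inf_mul_prod_sup hμ hμ' h x y)
    (mul_nonneg (tsum_nonneg (ite_prod_nonneg hμ)) (tsum_nonneg (ite_prod_nonneg hμ')))

end condVec

theorem order_across_conditioning_general {n : ℕ} (ν : Fin n → ℕ → ℝ)
    (hlc : ∀ i, LogConcavePMF (ν i))
    (lam lam' : ℝ) (hl : 0 < lam) (hll : lam ≤ lam')
    (R : ℝ)
    (hpos : 0 < ∑' y : Fin n → ℕ,
      if ((∑ i, y i : ℕ) : ℝ) < R then ∏ i, tilt (ν i) lam (y i) else 0)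
    (hpos' : 0 < ∑' y : Fin n → ℕ,
      if R < ((∑ i, y i : ℕ) : ℝ) then ∏ i, tilt (ν i) lam' (y i) else 0) :
    StochDom (condVec (fun i => tilt (ν i) lam) (fun k => (k : ℝ) < R))
      (condVec (fun i => tilt (ν i) lam') (fun k => R < (k : ℝ))) := by
  have hν : ∀ i x, 0 ≤ ν i x := fun i => (hlc i).1
  have hμ : ∀ i x, 0 ≤ tilt (ν i) lam x := fun i => tilt_nonneg (hν i) hl.le
  have hμ' : ∀ i x, 0 ≤ tilt (ν i) lam' x := fun i => tilt_nonneg (hν i) (hl.le.trans hll)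
  have below : Antitone fun k : ℕ => (k : ℝ) < R := fun j k hjk hk =>
    (Nat.cast_le.mpr hjk).trans_lt hk
  have above : Monotone fun k : ℕ => R < (k : ℝ) := fun j k hjk hj =>
    hj.trans_le (Nat.cast_le.mpr hjk)
  intro f hf hfb
  exact holley_tsum hf hfb (condVec_nonneg hμ) (condVec_nonneg hμ')
    (hasSum_condVec hpos) (hasSum_condVec hpos') <|
    condVec_mul_condVec_le below above hμ hμ' fun i =>
      tilt_mul_tilt_le_tilt_inf_mul_tilt_sup (hν i) hl.le hll

/-- Ordering across the conditioning event: for log-concave laws `νᵢ` and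
`0 < λ ≤ λ′`, the law of `𝐗ₙ^λ` conditioned on `{Sₙ^λ < R}` is stochastically
dominated by the law of `𝐗ₙ^{λ′}` conditioned on `{Sₙ^{λ′} > R}`, provided
both conditioning events have positive probability. -/
theorem order_across_conditioning {n : ℕ} (ν : Fin n → ℕ → ℝ)
    (hlc : ∀ i, LogConcavePMF (ν i)) (hν1 : ∀ i, HasSum (ν i) 1)
    (lam lam' : ℝ) (hl : 0 < lam) (hll : lam ≤ lam')
    (hZ : ∀ i, Summable (fun x : ℕ => lam ^ x * ν i x))
    (hZ' : ∀ i, Summable (fun x : ℕ => lam' ^ x * ν i x))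
    (R : ℝ)
    (hpos : 0 < ∑' y : Fin n → ℕ,
      if ((∑ i, y i : ℕ) : ℝ) < R then ∏ i, tilt (ν i) lam (y i) else 0)
    (hpos' : 0 < ∑' y : Fin n → ℕ,
      if R < ((∑ i, y i : ℕ) : ℝ) then ∏ i, tilt (ν i) lam' (y i) else 0) :
    StochDom (condVec (fun i => tilt (ν i) lam) (fun k => (k : ℝ) < R))
      (condVec (fun i => tilt (ν i) lam') (fun k => R < (k : ℝ))) :=
  order_across_conditioning_general ν hlc lam lam' hl hll R hpos hpos'
end

section
/- (Canonical measure sandwiched between tail conditionings) Let ν₁,…,νₙ be log-concave probability mass functions on ℕ, X₁,…,Xₙ independent with these laws, and R a real with P(Sₙ ≤ R) > 0, P(Sₙ = ⌊R⌋) > 0, P(Sₙ > R) > 0. Then in the coordinatewise stochastic order, P(𝐗ₙ ∈ · | Sₙ ≤ R) ≼ P(𝐗ₙ ∈ · | Sₙ = ⌊R⌋) ≼ P(𝐗ₙ ∈ · | Sₙ > R). -/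
open scoped BigOperators
open scoped Classical

/-!
Efron's theorem: for independent log-concave `Xᵢ` and monotone `f`, the conditional mean
`E[f(𝐗) | Sₙ = k]` is nondecreasing in `k`. By induction on `n` it reduces to two summands
`X, Y` and a coordinatewise monotone `g(X, Y)`. Log-concavity makes the law of `X` given
`X + Y = k + 1` dominate the law given `X + Y = k`, which in turn dominates the law of `X - 1`
given `X + Y = k + 1`; hence the two conditional laws couple with `X` moving by `0` or `1`, so
`Y` does not decrease either and `g` can only increase. The same argument applied to
`g = -b(Y + 1)/b(Y)` shows that convolution preserves log-concavity, which keeps the induction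
going. Finally the outer conditionings are mixtures of the canonical measures over `k ≤ ⌊R⌋` and
over `k > R`, so the sandwich follows from a mediant inequality.
-/

open Finset

namespace LogConcavePMF

variable {b : ℕ → ℝ}

theorem nonneg (hb : LogConcavePMF b) (x : ℕ) : 0 ≤ b x := hb.1 x

theorem pos_of_le (hb : LogConcavePMF b) {x y : ℕ} (hxy : x ≤ y) (hy : 0 < b y) : 0 < b x :=
  hb.2.1 x y hxy hy

theorem eq_zero_of_le (hb : LogConcavePMF b) {x y : ℕ} (hxy : x ≤ y) (hx : b x = 0) :
    b y = 0 :=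
  (hb.nonneg y).eq_or_lt.elim Eq.symm fun hy => absurd hx (hb.pos_of_le hxy hy).ne'

theorem mul_le_sq (hb : LogConcavePMF b) (x : ℕ) : b x * b (x + 2) ≤ b (x + 1) ^ 2 := hb.2.2 x

theorem mul_succ_le_succ_mul (hb : LogConcavePMF b) {m m' : ℕ} (h : m ≤ m') :
    b m * b (m' + 1) ≤ b (m + 1) * b m' := by
  induction m', h using Nat.le_induction with
  | base => rw [mul_comm]
  | succ m' _ ih =>
    rcases (hb.nonneg (m' + 2)).eq_or_lt with h0 | hpos
    · rw [← h0, mul_zero]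
      exact mul_nonneg (hb.nonneg _) (hb.nonneg _)
    · have hmid : 0 < b (m' + 1) := hb.pos_of_le (by omega) hpos
      refine le_of_mul_le_mul_right ?_ hmid
      nlinarith [mul_le_mul_of_nonneg_right ih hpos.le,
        mul_le_mul_of_nonneg_left (hb.mul_le_sq m') (hb.nonneg (m + 1))]

theorem div_succ_antitone (hb : LogConcavePMF b) : Antitone fun m => b (m + 1) / b m := by
  refine antitone_nat_of_succ_le fun m => ?_
  rcases (hb.nonneg (m + 1)).eq_or_lt with h0 | hpos
  · simp [← h0]
  · rw [div_le_div_iff₀ hpos (hb.pos_of_le m.le_succ hpos)]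
    nlinarith [hb.mul_le_sq m]

end LogConcavePMF

theorem sum_range_mul_sum_range_le_of_cross {A B : ℕ → ℝ} (hA : ∀ i, 0 ≤ A i)
    (hB : ∀ i, 0 ≤ B i) {j M N : ℕ} (hjM : j ≤ M) (hMN : M ≤ N)
    (hcross : ∀ i < j, ∀ i' ∈ Ico j M, B i * A i' ≤ A i * B i') :
    (∑ i ∈ range j, B i) * ∑ i ∈ range M, A i ≤ (∑ i ∈ range j, A i) * ∑ i ∈ range N, B i := by
  have hBN : ∑ i ∈ range j, B i + ∑ i ∈ Ico j M, B i ≤ ∑ i ∈ range N, B i := by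
    rw [sum_range_add_sum_Ico _ hjM]
    exact sum_le_sum_of_subset_of_nonneg (range_subset_range.2 hMN) fun i _ _ => hB i
  have hmixed : (∑ i ∈ range j, B i) * ∑ i ∈ Ico j M, A i ≤
      (∑ i ∈ range j, A i) * ∑ i ∈ Ico j M, B i := by
    rw [sum_mul_sum, sum_mul_sum]
    exact sum_le_sum fun i hi => sum_le_sum fun i' hi' => hcross i (mem_range.1 hi) i' hi'
  rw [← sum_range_add_sum_Ico _ hjM]
  nlinarith [mul_le_mul_of_nonneg_left hBN (sum_nonneg fun i (_ : i ∈ range j) => hA i)]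

/-- Discrete coupling: if the distribution function of `q` lies between those of `p` and of `p`
shifted by one, then `q` couples with `p` so that each atom `j` of `p` moves to `j` or `j + 1`. -/
theorem sum_mul_le_sum_mul_of_cdf_between {p q φ ψ : ℕ → ℝ} {K : ℕ}
    (hlow : ∀ j ≤ K, ∑ i ∈ range j, p i ≤ ∑ i ∈ range (j + 1), q i)
    (hup : ∀ j < K, ∑ i ∈ range (j + 1), q i ≤ ∑ i ∈ range (j + 1), p i)
    (htot : ∑ i ∈ range (K + 1), q i = ∑ i ∈ range K, p i)
    (hstay : ∀ j ≤ K, φ j ≤ ψ j) (hmove : ∀ j < K, φ j ≤ ψ (j + 1)) :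
    ∑ j ∈ range K, p j * φ j ≤ ∑ j ∈ range (K + 1), q j * ψ j := by
  -- `kept J` is the mass of `p` that stays at `J`; the rest of `p J` moves to `J + 1`.
  set kept : ℕ → ℝ := fun J => ∑ i ∈ range (J + 1), q i - ∑ i ∈ range J, p i with hkept
  have key : ∀ J ≤ K,
      ∑ j ∈ range J, p j * φ j + kept J * φ J ≤ ∑ j ∈ range (J + 1), q j * ψ j := by
    intro J hJ
    induction J with
    | zero =>
      have hq0 := hlow 0 (Nat.zero_le K)
      simp only [hkept, range_zero, sum_range_one, sum_empty, zero_add, sub_zero] at hq0 ⊢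
      exact mul_le_mul_of_nonneg_left (hstay 0 (Nat.zero_le K)) hq0
    | succ J ih =>
      have hq : q (J + 1) = kept (J + 1) + (p J - kept J) := by
        simp only [hkept, sum_range_succ]; ring
      have hkept_nonneg : 0 ≤ kept (J + 1) := sub_nonneg.2 (hlow (J + 1) hJ)
      have hmoved_nonneg : 0 ≤ p J - kept J := by
        have := hup J hJ
        simp only [hkept, sum_range_succ] at this ⊢; linarith
      have hstays := mul_le_mul_of_nonneg_left (hstay (J + 1) hJ) hkept_nonneg
      have hmoves := mul_le_mul_of_nonneg_left (hmove J hJ) hmoved_nonneg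
      rw [sum_range_succ, sum_range_succ _ (J + 1), hq]
      nlinarith [ih (by omega)]
  simpa [hkept, htot] using key K le_rfl

theorem sum_range_succ_mul_succ_sub (a b : ℕ → ℝ) (j k : ℕ) :
    ∑ i ∈ range (j + 1), a i * b (k + 1 - i) =
      a 0 * b (k + 1) + ∑ i ∈ range j, a (i + 1) * b (k - i) := by
  rw [sum_range_succ', add_comm]
  simp only [Nat.add_sub_add_right, Nat.sub_zero]

noncomputable def seqConv (a b : ℕ → ℝ) (k : ℕ) : ℝ := ∑ j ∈ range (k + 1), a j * b (k - j)

theorem seqConv_succ (a b : ℕ → ℝ) (k : ℕ) :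
    seqConv a b (k + 1) = a 0 * b (k + 1) + ∑ i ∈ range (k + 1), a (i + 1) * b (k - i) :=
  sum_range_succ_mul_succ_sub a b (k + 1) k

section SeqConv

variable {a b : ℕ → ℝ}

theorem seqConv_nonneg (ha : LogConcavePMF a) (hb : LogConcavePMF b) (k : ℕ) :
    0 ≤ seqConv a b k :=
  sum_nonneg fun j _ => mul_nonneg (ha.nonneg j) (hb.nonneg _)

theorem seqConv_pos_of_le (ha : LogConcavePMF a) (hb : LogConcavePMF b) {x y : ℕ}
    (hxy : x ≤ y) (hy : 0 < seqConv a b y) : 0 < seqConv a b x := by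
  obtain ⟨j, hj, hterm⟩ := exists_lt_of_sum_lt (f := fun _ => (0 : ℝ)) (by simpa [seqConv] using hy)
  have haj : 0 < a j := (ha.nonneg j).lt_of_ne (left_ne_zero_of_mul hterm.ne').symm
  have hbj : 0 < b (y - j) := (hb.nonneg _).lt_of_ne (right_ne_zero_of_mul hterm.ne').symm
  refine sum_pos' (fun i _ => mul_nonneg (ha.nonneg i) (hb.nonneg _))
    ⟨min j x, mem_range.2 (by omega), mul_pos (ha.pos_of_le (min_le_left j x) haj)
      (hb.pos_of_le (by omega) hbj)⟩

/-- The law of `X` given `X + Y = k + 1` dominates the law of `X` given `X + Y = k`. -/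
theorem seqConv_cdf_up (ha : LogConcavePMF a) (hb : LogConcavePMF b) {j k : ℕ} (hjk : j ≤ k) :
    (∑ i ∈ range (j + 1), a i * b (k + 1 - i)) * seqConv a b k ≤
      (∑ i ∈ range (j + 1), a i * b (k - i)) * seqConv a b (k + 1) := by
  refine sum_range_mul_sum_range_le_of_cross (fun i => mul_nonneg (ha.nonneg i) (hb.nonneg _))
    (fun i => mul_nonneg (ha.nonneg i) (hb.nonneg _)) (by omega) (Nat.le_succ _) ?_
  intro i hi i' hi'
  rw [mem_Ico] at hi'
  rw [show k + 1 - i = k - i + 1 by omega, show k + 1 - i' = k - i' + 1 by omega]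
  nlinarith [hb.mul_succ_le_succ_mul (show k - i' ≤ k - i by omega),
    mul_nonneg (ha.nonneg i) (ha.nonneg i')]

/-- The law of `Y` given `X + Y = k + 1` dominates the law of `Y` given `X + Y = k`. -/
theorem seqConv_cdf_low (ha : LogConcavePMF a) (hb : LogConcavePMF b) {j k : ℕ}
    (hjk : j ≤ k + 1) :
    (∑ i ∈ range j, a i * b (k - i)) * seqConv a b (k + 1) ≤
      (∑ i ∈ range (j + 1), a i * b (k + 1 - i)) * seqConv a b k := by
  have hcross := sum_range_mul_sum_range_le_of_cross (A := fun i => a (i + 1) * b (k - i))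
    (B := fun i => a i * b (k - i)) (fun i => mul_nonneg (ha.nonneg _) (hb.nonneg _))
    (fun i => mul_nonneg (ha.nonneg i) (hb.nonneg _)) hjk le_rfl (fun i hi i' hi' => by
      rw [mem_Ico] at hi'
      nlinarith [ha.mul_succ_le_succ_mul (show i ≤ i' by omega),
        mul_nonneg (hb.nonneg (k - i)) (hb.nonneg (k - i'))])
  change _ ≤ _ * seqConv a b k at hcross
  have hpartial : ∑ i ∈ range j, a i * b (k - i) ≤ seqConv a b k :=
    sum_le_sum_of_subset_of_nonneg (range_subset_range.2 hjk)
      fun i _ _ => mul_nonneg (ha.nonneg i) (hb.nonneg _)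
  rw [seqConv_succ, sum_range_succ_mul_succ_sub]
  nlinarith [mul_le_mul_of_nonneg_left hpartial (mul_nonneg (ha.nonneg 0) (hb.nonneg (k + 1)))]

theorem seqConv_weighted_mul_le (ha : LogConcavePMF a) (hb : LogConcavePMF b)
    (g : ℕ → ℕ → ℝ) (hg₁ : ∀ m, Monotone (g · m)) (hg₂ : ∀ j, Monotone (g j)) (k : ℕ) :
    (∑ j ∈ range (k + 1), a j * b (k - j) * g j (k - j)) * seqConv a b (k + 1) ≤
      (∑ j ∈ range (k + 1 + 1), a j * b (k + 1 - j) * g j (k + 1 - j)) * seqConv a b k := by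
  have hcoupling := sum_mul_le_sum_mul_of_cdf_between
    (p := fun j => a j * b (k - j) * seqConv a b (k + 1))
    (q := fun j => a j * b (k + 1 - j) * seqConv a b k)
    (φ := fun j => g j (k - j)) (ψ := fun j => g j (k + 1 - j)) (K := k + 1)
    (fun j hj => by simpa only [← sum_mul] using seqConv_cdf_low ha hb hj)
    (fun j hj => by simpa only [← sum_mul] using seqConv_cdf_up ha hb (Nat.lt_succ_iff.1 hj))
    (by simp only [← sum_mul]; exact mul_comm _ _)
    (fun j _ => hg₂ j (by omega))
    (fun j _ => by simpa only [Nat.add_sub_add_right] using hg₁ (k - j) j.le_succ)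
  calc _ = ∑ j ∈ range (k + 1), a j * b (k - j) * seqConv a b (k + 1) * g j (k - j) := by
        rw [sum_mul]; exact sum_congr rfl fun j _ => by ring
    _ ≤ ∑ j ∈ range (k + 1 + 1), a j * b (k + 1 - j) * seqConv a b k * g j (k + 1 - j) :=
        hcoupling
    _ = _ := by rw [sum_mul]; exact sum_congr rfl fun j _ => by ring

theorem mul_seqConv_le_mul_seqConv_succ (ha : LogConcavePMF a) (hb : LogConcavePMF b) (k : ℕ) :
    a (k + 2) * seqConv a b k ≤ a (k + 1) * seqConv a b (k + 1) := by
  have hshift :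
      a (k + 2) * seqConv a b k ≤ a (k + 1) * ∑ i ∈ range (k + 1), a (i + 1) * b (k - i) := by
    rw [seqConv, mul_sum, mul_sum]
    refine sum_le_sum fun i hi => ?_
    nlinarith [ha.mul_succ_le_succ_mul (show i ≤ k + 1 by simp at hi; omega), hb.nonneg (k - i)]
  rw [seqConv_succ]
  nlinarith [mul_nonneg (ha.nonneg (k + 1)) (mul_nonneg (ha.nonneg 0) (hb.nonneg (k + 1)))]

theorem logConcavePMF_seqConv (ha : LogConcavePMF a) (hb : LogConcavePMF b) :
    LogConcavePMF (seqConv a b) := by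
  refine ⟨seqConv_nonneg ha hb, fun x y hxy hy => seqConv_pos_of_le ha hb hxy hy, fun k => ?_⟩
  -- Efron's monotonicity for `g(X, Y) = -b (Y + 1) / b Y` is log-concavity of `seqConv a b`
  -- up to boundary terms, which `mul_seqConv_le_mul_seqConv_succ` controls.
  set g : ℕ → ℕ → ℝ := fun _ m => -(b (m + 1) / b m)
  have hbg : ∀ m, b m * g 0 m = -b (m + 1) := fun m => by
    rcases eq_or_ne (b m) 0 with h0 | hne
    · simp [g, h0, hb.eq_zero_of_le m.le_succ h0]
    · simp only [g]; field_simp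
  have hweighted : ∀ K, ∑ j ∈ range (K + 1), a j * b (K - j) * g j (K - j) =
      -(seqConv a b (K + 1) - a (K + 1) * b 0) := fun K => by
    rw [seqConv, sum_range_succ _ (K + 1), Nat.sub_self, add_sub_cancel_right, ← sum_neg_distrib]
    refine sum_congr rfl fun j hj => ?_
    rw [mul_assoc, hbg, show K + 1 - j = K - j + 1 by simp at hj; omega]
    ring
  have hefron := seqConv_weighted_mul_le ha hb g (fun _ => monotone_const)
    (fun _ => hb.div_succ_antitone.neg) k
  rw [hweighted, hweighted] at hefron
  nlinarith [mul_le_mul_of_nonneg_left (mul_seqConv_le_mul_seqConv_succ ha hb k) (hb.nonneg 0)]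

end SeqConv

theorem mul_le_mul_of_le_of_forall_succ {U c : ℕ → ℝ} (hc : ∀ k, 0 ≤ c k)
    (hc_pos : ∀ k l, k ≤ l → 0 < c l → 0 < c k) (hU : ∀ k, c k = 0 → U k = 0)
    (hstep : ∀ k, U k * c (k + 1) ≤ U (k + 1) * c k) {k l : ℕ} (hkl : k ≤ l) :
    U k * c l ≤ U l * c k := by
  induction l, hkl using Nat.le_induction with
  | base => exact le_rfl
  | succ l hkl ih =>
    rcases (hc (l + 1)).eq_or_lt with h0 | hpos
    · simp [← h0, hU _ h0.symm]
    · have hl := hc_pos l (l + 1) l.le_succ hpos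
      have hk := hc_pos k (l + 1) (by omega) hpos
      refine le_of_mul_le_mul_left ?_ hl
      nlinarith [mul_le_mul_of_nonneg_right ih hpos.le, mul_le_mul_of_nonneg_right (hstep l) hk.le]

theorem monotone_ite_div {u b : ℕ → ℝ} {C : ℝ} (hb : ∀ m, 0 ≤ b m)
    (hb_succ : ∀ m, b m = 0 → b (m + 1) = 0) (hu : ∀ m, u m ≤ C * b m)
    (hstep : ∀ m, u m * b (m + 1) ≤ u (m + 1) * b m) :
    Monotone fun m => if b m = 0 then C else u m / b m := by
  refine monotone_nat_of_le_succ fun m => ?_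
  rcases (hb m).eq_or_lt with h0 | hpos
  · simp [← h0, hb_succ m h0.symm]
  · rw [if_neg hpos.ne']
    rcases (hb (m + 1)).eq_or_lt with h1 | hpos1
    · rw [if_pos h1.symm, div_le_iff₀ hpos]
      exact hu m
    · rw [if_neg hpos1.ne', div_le_div_iff₀ hpos hpos1]
      exact hstep m

theorem Finset.Nat.sum_antidiagonalTuple_succ {M : Type*} [AddCommMonoid M] {n : ℕ}
    (F : (Fin (n + 1) → ℕ) → M) (k : ℕ) :
    ∑ x ∈ Nat.antidiagonalTuple (n + 1) k, F x =
      ∑ j ∈ range (k + 1), ∑ y ∈ Nat.antidiagonalTuple n (k - j), F (Fin.cons j y) := by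
  calc ∑ x ∈ Nat.antidiagonalTuple (n + 1) k, F x
      = ∑ p ∈ (Nat.antidiagonalTuple (n + 1) k).map (Fin.consEquiv fun _ => ℕ).symm.toEmbedding,
          F (Fin.cons p.1 p.2) := by simp
    _ = _ := sum_finset_product _ _ _ fun p => by
      simp only [mem_map_equiv, Equiv.symm_symm, Fin.consEquiv_apply,
        Nat.mem_antidiagonalTuple, Fin.sum_cons, mem_range]
      omega

section SliceMean

variable {n : ℕ}

/-- `sliceMean ν f k = E[f(𝐗); Sₙ = k]` for independent coordinates `Xᵢ ~ ν i`. -/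
noncomputable def sliceMean (ν : Fin n → ℕ → ℝ) (f : (Fin n → ℕ) → ℝ) (k : ℕ) : ℝ :=
  ∑ x ∈ Finset.Nat.antidiagonalTuple n k, f x * ∏ i, ν i (x i)

theorem sliceMean_succ (ν : Fin (n + 1) → ℕ → ℝ) (f : (Fin (n + 1) → ℕ) → ℝ) (k : ℕ) :
    sliceMean ν f k = ∑ j ∈ range (k + 1),
      ν 0 j * sliceMean (fun i => ν i.succ) (fun y => f (Fin.cons j y)) (k - j) := by
  rw [sliceMean, Nat.sum_antidiagonalTuple_succ]
  refine sum_congr rfl fun j _ => ?_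
  rw [sliceMean, mul_sum]
  refine sum_congr rfl fun y _ => ?_
  rw [Fin.prod_univ_succ]
  simp only [Fin.cons_zero, Fin.cons_succ]
  ring

theorem sliceMean_one_succ (ν : Fin (n + 1) → ℕ → ℝ) (k : ℕ) :
    sliceMean ν 1 k = seqConv (ν 0) (sliceMean (fun i => ν i.succ) 1) k :=
  sliceMean_succ ν 1 k

theorem abs_sliceMean_le {ν : Fin n → ℕ → ℝ} (hν : ∀ i x, 0 ≤ ν i x)
    {f : (Fin n → ℕ) → ℝ} {C : ℝ} (hC : ∀ x, |f x| ≤ C) (k : ℕ) :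
    |sliceMean ν f k| ≤ C * sliceMean ν 1 k := by
  rw [sliceMean, sliceMean, mul_sum]
  refine (abs_sum_le_sum_abs _ _).trans (sum_le_sum fun x _ => ?_)
  have hp : 0 ≤ ∏ i, ν i (x i) := prod_nonneg fun i _ => hν i _
  rw [abs_mul, abs_of_nonneg hp, Pi.one_apply, one_mul]
  exact mul_le_mul_of_nonneg_right (hC x) hp

theorem sliceMean_mono {ν : Fin n → ℕ → ℝ} (hν : ∀ i x, 0 ≤ ν i x)
    {f f' : (Fin n → ℕ) → ℝ} (h : ∀ x, f x ≤ f' x) (k : ℕ) :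
    sliceMean ν f k ≤ sliceMean ν f' k :=
  sum_le_sum fun x _ => mul_le_mul_of_nonneg_right (h x) (prod_nonneg fun i _ => hν i _)

theorem logConcavePMF_sliceMean_one {ν : Fin n → ℕ → ℝ} (hν : ∀ i, LogConcavePMF (ν i)) :
    LogConcavePMF (sliceMean ν 1) := by
  induction n with
  | zero =>
    have hsucc : ∀ k, sliceMean ν 1 (k + 1) = 0 := fun k => by simp [sliceMean]
    have hzero : sliceMean ν 1 0 = 1 := by simp [sliceMean]
    refine ⟨fun k => ?_, fun x y hxy hy => ?_, fun k => ?_⟩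
    · cases k <;> simp [hzero, hsucc]
    · obtain rfl : y = 0 := by
        by_contra hne
        obtain ⟨y, rfl⟩ := Nat.exists_eq_succ_of_ne_zero hne
        simp [hsucc] at hy
      simp_all
    · rw [hsucc (k + 1), mul_zero]
      positivity
  | succ n ih =>
    rw [funext (sliceMean_one_succ ν)]
    exact logConcavePMF_seqConv (hν 0) (ih fun i => hν i.succ)

theorem sliceMean_mul_sliceMean_succ_le {ν : Fin n → ℕ → ℝ} (hν : ∀ i, LogConcavePMF (ν i))
    {f : (Fin n → ℕ) → ℝ} (hf : Monotone f) {C : ℝ} (hC : ∀ x, |f x| ≤ C) (k : ℕ) :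
    sliceMean ν f k * sliceMean ν 1 (k + 1) ≤ sliceMean ν f (k + 1) * sliceMean ν 1 k := by
  induction n generalizing k with
  | zero => simp [sliceMean]
  | succ n ih =>
    set ν' : Fin n → ℕ → ℝ := fun i => ν i.succ
    have hν' : ∀ i, LogConcavePMF (ν' i) := fun i => hν i.succ
    have hb := logConcavePMF_sliceMean_one hν'
    set b := sliceMean ν' 1
    set u : ℕ → ℕ → ℝ := fun j => sliceMean ν' fun y => f (Fin.cons j y)
    have hu : ∀ j m, |u j m| ≤ C * b m := fun j m =>
      abs_sliceMean_le (fun i => (hν' i).nonneg) (fun y => hC _) m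
    -- the conditional mean `E[f(j, 𝐘) | S' = m]`, set to its upper bound off the support
    set g : ℕ → ℕ → ℝ := fun j m => if b m = 0 then C else u j m / b m
    have hg₁ : ∀ m, Monotone (g · m) := fun m => monotone_nat_of_le_succ fun j => by
      by_cases h0 : b m = 0
      · simp [g, h0]
      · simp only [g, if_neg h0]
        exact div_le_div_of_nonneg_right (sliceMean_mono (fun i => (hν' i).nonneg)
          (fun y => hf (Fin.cons_le_cons.2 ⟨j.le_succ, le_rfl⟩)) m) (hb.nonneg m)
    have hg₂ : ∀ j, Monotone (g j) := fun j =>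
      monotone_ite_div hb.nonneg (fun m => hb.eq_zero_of_le m.le_succ)
        (fun m => (le_abs_self _).trans (hu j m))
        (ih hν' (fun y y' h => hf (Fin.cons_le_cons.2 ⟨le_rfl, h⟩)) (fun y => hC _))
    have hterm : ∀ j m, ν 0 j * u j m = ν 0 j * b m * g j m := fun j m => by
      by_cases h0 : b m = 0
      · have := hu j m
        rw [h0, mul_zero, abs_nonpos_iff] at this
        simp [this, h0]
      · simp only [g, if_neg h0]
        field_simp
    rw [sliceMean_one_succ, sliceMean_one_succ, sliceMean_succ, sliceMean_succ]
    have hefron := seqConv_weighted_mul_le (hν 0) hb g hg₁ hg₂ k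
    simp only [← hterm] at hefron
    exact hefron

theorem sliceMean_mul_sliceMean_le {ν : Fin n → ℕ → ℝ} (hν : ∀ i, LogConcavePMF (ν i))
    {f : (Fin n → ℕ) → ℝ} (hf : Monotone f) {C : ℝ} (hC : ∀ x, |f x| ≤ C) {k l : ℕ}
    (hkl : k ≤ l) : sliceMean ν f k * sliceMean ν 1 l ≤ sliceMean ν f l * sliceMean ν 1 k := by
  have hW := logConcavePMF_sliceMean_one hν
  refine mul_le_mul_of_le_of_forall_succ hW.nonneg (fun _ _ h => hW.pos_of_le h) (fun m hm => ?_)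
    (sliceMean_mul_sliceMean_succ_le hν hf hC) hkl
  simpa [hm] using abs_sliceMean_le (fun i => (hν i).nonneg) hC m

end SliceMean

theorem summable_prod_apply {n : ℕ} {ν : Fin n → ℕ → ℝ} (hν0 : ∀ i x, 0 ≤ ν i x)
    (hν : ∀ i, Summable (ν i)) : Summable fun x : Fin n → ℕ => ∏ i, ν i (x i) := by
  refine summable_of_sum_le (c := ∏ i, ∑' j, ν i j) (fun x => prod_nonneg fun i _ => hν0 i _)
    fun s => ?_
  calc ∑ x ∈ s, ∏ i, ν i (x i)
      ≤ ∑ x ∈ Fintype.piFinset fun i => s.image (· i), ∏ i, ν i (x i) :=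
        sum_le_sum_of_subset_of_nonneg
          (fun x hx => Fintype.mem_piFinset.2 fun i => mem_image_of_mem _ hx)
          fun x _ _ => prod_nonneg fun i _ => hν0 i _
    _ = ∏ i, ∑ j ∈ s.image (· i), ν i j := (prod_univ_sum _ _).symm
    _ ≤ ∏ i, ∑' j, ν i j :=
        prod_le_prod (fun i _ => sum_nonneg fun j _ => hν0 i j)
          fun i _ => (hν i).sum_le_tsum _ fun j _ => hν0 i j

theorem hasSum_sum_antidiagonalTuple {α : Type*} [AddCommMonoid α] [TopologicalSpace α]
    [ContinuousAdd α] [RegularSpace α] {n : ℕ} {h : (Fin n → ℕ) → α} {a : α}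
    (hh : HasSum h a) : HasSum (fun k => ∑ x ∈ Nat.antidiagonalTuple n k, h x) a :=
  ((Nat.sigmaAntidiagonalTupleEquivTuple n).hasSum_iff.2 hh).sigma fun k =>
    (Nat.antidiagonalTuple n k).hasSum h

theorem Summable.ite_zero {ι : Type*} {F : ι → ℝ} (hF : Summable F) (P : ι → Prop) :
    Summable fun i => if P i then F i else 0 :=
  hF.norm.of_norm_bounded fun i => by split_ifs <;> simp

theorem tsum_ite_sum_eq {n : ℕ} {h : (Fin n → ℕ) → ℝ} (hh : Summable h) (E : ℕ → Prop) :
    ∑' x, (if E (∑ i, x i) then h x else 0) =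
      ∑' k, if E k then ∑ x ∈ Nat.antidiagonalTuple n k, h x else 0 := by
  refine (hasSum_sum_antidiagonalTuple (hh.ite_zero _).hasSum).tsum_eq.symm.trans
    (tsum_congr fun k => ?_)
  rw [sum_congr rfl fun x hx => by rw [Nat.mem_antidiagonalTuple.1 hx], sum_ite_irrel,
    sum_const_zero]

theorem tsum_mul_condVec {n : ℕ} (ν : Fin n → ℕ → ℝ) (E : ℕ → Prop) (f : (Fin n → ℕ) → ℝ) :
    ∑' x, f x * condVec ν E x =
      (∑' x, if E (∑ i, x i) then f x * ∏ i, ν i (x i) else 0) /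
        ∑' y : Fin n → ℕ, if E (∑ i, y i) then ∏ i, ν i (y i) else 0 := by
  rw [← tsum_div_const]
  refine tsum_congr fun x => ?_
  rw [condVec]
  split_ifs <;> ring

theorem tsum_ite_div_le_tsum_ite_div {G W : ℕ → ℝ} (hG : Summable G) (hW : Summable W)
    {P Q : ℕ → Prop} (hPQ : ∀ k l, P k → Q l → G k * W l ≤ G l * W k)
    (hP : 0 < ∑' k, if P k then W k else 0) (hQ : 0 < ∑' l, if Q l then W l else 0) :
    (∑' k, if P k then G k else 0) / (∑' k, if P k then W k else 0) ≤
      (∑' l, if Q l then G l else 0) / (∑' l, if Q l then W l else 0) := by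
  rw [div_le_div_iff₀ hP hQ]
  calc (∑' k, if P k then G k else 0) * ∑' l, (if Q l then W l else 0)
      = ∑' k, (if P k then G k else 0) * ∑' l, (if Q l then W l else 0) := tsum_mul_right.symm
    _ ≤ ∑' k, (∑' l, if Q l then G l else 0) * if P k then W k else 0 := by
        refine Summable.tsum_le_tsum (fun k => ?_) ((hG.ite_zero P).mul_right _)
          ((hW.ite_zero P).mul_left _)
        rw [← tsum_mul_left, ← tsum_mul_right]
        refine Summable.tsum_le_tsum (fun l => ?_) ((hW.ite_zero Q).mul_left _)
          ((hG.ite_zero Q).mul_right _)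
        by_cases hk : P k
        · by_cases hl : Q l
          · simpa [hk, hl] using hPQ k l hk hl
          · simp [hl]
        · simp [hk]
    _ = _ := tsum_mul_left

theorem stochDom_condVec_of_le {n : ℕ} {ν : Fin n → ℕ → ℝ} (hν : ∀ i, LogConcavePMF (ν i))
    (hν1 : ∀ i, Summable (ν i)) {P Q : ℕ → Prop} (hPQ : ∀ k l, P k → Q l → k ≤ l)
    (hP : 0 < ∑' y : Fin n → ℕ, if P (∑ i, y i) then ∏ i, ν i (y i) else 0)
    (hQ : 0 < ∑' y : Fin n → ℕ, if Q (∑ i, y i) then ∏ i, ν i (y i) else 0) :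
    StochDom (condVec ν P) (condVec ν Q) := by
  rintro f hf ⟨C, hC⟩
  have hp := summable_prod_apply (fun i => (hν i).nonneg) hν1
  have hfp : Summable fun x => f x * ∏ i, ν i (x i) :=
    (hp.mul_left C).of_norm_bounded fun x => by
      rw [norm_mul, Real.norm_eq_abs, Real.norm_of_nonneg (prod_nonneg fun i _ => (hν i).nonneg _)]
      exact mul_le_mul_of_nonneg_right (hC x) (prod_nonneg fun i _ => (hν i).nonneg _)
  have hmass : ∀ E : ℕ → Prop, ∑' y : Fin n → ℕ, (if E (∑ i, y i) then ∏ i, ν i (y i) else 0) =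
      ∑' k, if E k then sliceMean ν 1 k else 0 := fun E => by
    simp only [tsum_ite_sum_eq hp, sliceMean, Pi.one_apply, one_mul]
  rw [tsum_mul_condVec, tsum_mul_condVec, tsum_ite_sum_eq hfp, tsum_ite_sum_eq hfp, hmass, hmass]
  rw [hmass] at hP hQ
  exact tsum_ite_div_le_tsum_ite_div (hasSum_sum_antidiagonalTuple hfp.hasSum).summable
    (by convert (hasSum_sum_antidiagonalTuple hp.hasSum).summable using 2; simp [sliceMean])
    (fun k l hk hl => sliceMean_mul_sliceMean_le hν hf hC (hPQ k l hk hl)) hP hQ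

/-- The canonical measure is sandwiched between the tail conditionings: for
independent `X₁,…,Xₙ` with log-concave laws and `R` with
`P(Sₙ ≤ R) > 0`, `P(Sₙ = ⌊R⌋) > 0`, `P(Sₙ > R) > 0`, one has
`P(𝐗ₙ ∈ · | Sₙ ≤ R) ≼ P(𝐗ₙ ∈ · | Sₙ = ⌊R⌋) ≼ P(𝐗ₙ ∈ · | Sₙ > R)`. -/
theorem canonical_sandwich {n : ℕ} (ν : Fin n → ℕ → ℝ)
    (hlc : ∀ i, LogConcavePMF (ν i)) (hν1 : ∀ i, HasSum (ν i) 1)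
    (R : ℝ)
    (hle : 0 < ∑' y : Fin n → ℕ,
      if ((∑ i, y i : ℕ) : ℝ) ≤ R then ∏ i, ν i (y i) else 0)
    (heq : 0 < ∑' y : Fin n → ℕ,
      if (∑ i, y i) = Nat.floor R then ∏ i, ν i (y i) else 0)
    (hgt : 0 < ∑' y : Fin n → ℕ,
      if R < ((∑ i, y i : ℕ) : ℝ) then ∏ i, ν i (y i) else 0) :
    StochDom (condVec ν (fun k => (k : ℝ) ≤ R))
        (condVec ν (fun k => k = Nat.floor R)) ∧
      StochDom (condVec ν (fun k => k = Nat.floor R))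
        (condVec ν (fun k => R < (k : ℝ))) := by
  have hν := fun i => (hν1 i).summable
  exact ⟨stochDom_condVec_of_le hlc hν (fun k l hk hl => hl ▸ Nat.le_floor hk)
      (by convert hle) (by convert heq),
    stochDom_condVec_of_le hlc hν (fun k l hk hl => hk ▸ Nat.floor_le_of_le hl.le)
      (by convert heq) (by convert hgt)⟩
end
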